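/- arXiv:2411.07356 — 3 statements merged into one kernel-verified Lean document; each statement's English description precedes it below -/
import Mathlib

section
/- For any 2N × 2N complex matrix M that is self dual, i.e., Q_{2N} M^T Q_{2N}^T = M where Q_{2N} is the standard antisymmetric matrix with entries −1 (+1) on the leading upper (lower) off-diagonal blocks, every eigenvalue of M has even algebraic multiplicity (the spectrum is doubly degenerate). -/
open Matrix

/-- The standard symplectic form matrix `Q_{2N}`: block diagonal with `2 × 2`
blocks `[[0, −1],[1, 0]]`. -/
noncomputable def Qform (N : ℕ) : Matrix (Fin (2 * N)) (Fin (2 * N)) ℂ :=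
  Matrix.of fun i j =>
    if (i : ℕ) % 2 = 0 ∧ (j : ℕ) = (i : ℕ) + 1 then -1
    else if (j : ℕ) % 2 = 0 ∧ (i : ℕ) = (j : ℕ) + 1 then 1 else 0

section Aux

lemma Qform_apply' (N : ℕ) (i j : Fin (2 * N)) :
    Qform N i j = if (i : ℕ) % 2 = 0 ∧ (j : ℕ) = (i : ℕ) + 1 then -1
      else if (j : ℕ) % 2 = 0 ∧ (i : ℕ) = (j : ℕ) + 1 then 1 else 0 := rfl

lemma Qform_transpose (N : ℕ) : (Qform N)ᵀ = -Qform N := by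
  ext i j
  simp only [transpose_apply, Matrix.neg_apply, Qform_apply']
  split_ifs <;> first | ring1 | (exfalso; omega)

lemma Qform_mul_transpose (N : ℕ) : Qform N * (Qform N)ᵀ = 1 := by
  ext i j
  rw [mul_apply]
  simp only [transpose_apply]
  rcases Nat.even_or_odd (i : ℕ) with hi | hi
  · have hi2 : (i : ℕ) % 2 = 0 := Nat.even_iff.mp hi
    have hlt : (i : ℕ) + 1 < 2 * N := by have := i.isLt; omega
    set p : Fin (2 * N) := ⟨(i : ℕ) + 1, hlt⟩ with hp
    have hpv : (p : ℕ) = (i : ℕ) + 1 := rfl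
    rw [Finset.sum_eq_single p]
    · have h1 : Qform N i p = -1 := by
        rw [Qform_apply', if_pos ⟨hi2, hpv⟩]
      rw [h1]
      by_cases hij : i = j
      · subst hij
        rw [h1, one_apply_eq]; ring
      · have hji : (j : ℕ) ≠ (i : ℕ) := fun h => hij (Fin.ext h).symm
        have h2 : Qform N j p = 0 := by
          rw [Qform_apply', if_neg, if_neg] <;> rw [hpv] <;> intro hc <;> omega
        rw [h2, one_apply_ne (fun h => hij h)]; ring
    · intro k _ hk
      have hkp : (k : ℕ) ≠ (i : ℕ) + 1 := fun h => hk (Fin.ext (h.trans hpv.symm))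
      have h0 : Qform N i k = 0 := by
        rw [Qform_apply', if_neg, if_neg] <;> intro hc <;> omega
      rw [h0, zero_mul]
    · intro h; exact absurd (Finset.mem_univ p) h
  · have hi2 : (i : ℕ) % 2 = 1 := Nat.odd_iff.mp hi
    have hlt : (i : ℕ) - 1 < 2 * N := by have := i.isLt; omega
    set p : Fin (2 * N) := ⟨(i : ℕ) - 1, hlt⟩ with hp
    have hpv : (p : ℕ) = (i : ℕ) - 1 := rfl
    rw [Finset.sum_eq_single p]
    · have h1 : Qform N i p = 1 := by
        rw [Qform_apply', if_neg, if_pos]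
        · exact ⟨by omega, by omega⟩
        · rw [hpv]; intro hc; omega
      rw [h1]
      by_cases hij : i = j
      · subst hij
        rw [h1, one_apply_eq]; ring
      · have hji : (j : ℕ) ≠ (i : ℕ) := fun h => hij (Fin.ext h).symm
        have h2 : Qform N j p = 0 := by
          rw [Qform_apply', if_neg, if_neg] <;> rw [hpv] <;> intro hc <;> omega
        rw [h2, one_apply_ne (fun h => hij h)]; ring
    · intro k _ hk
      have hkp : (k : ℕ) ≠ (i : ℕ) - 1 := fun h => hk (Fin.ext (h.trans hpv.symm))
      have h0 : Qform N i k = 0 := by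
        rw [Qform_apply', if_neg, if_neg] <;> intro hc <;> omega
      rw [h0, zero_mul]
    · intro h; exact absurd (Finset.mem_univ p) h

open Module LinearMap Submodule in
/-- A finite-dimensional complex vector space carrying a nondegenerate alternating
bilinear form has even dimension. -/
lemma even_finrank_of_isAlt_nondeg :
    ∀ (n : ℕ) {V : Type} [AddCommGroup V] [Module ℂ V] [FiniteDimensional ℂ V]
      (B : LinearMap.BilinForm ℂ V), finrank ℂ V = n → B.IsAlt → B.Nondegenerate → Even n := by
  intro n
  induction n using Nat.strong_induction_on with
  | _ n ih =>
    intro V _ _ _ B hn halt hnd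
    rcases eq_or_ne n 0 with h0 | h0
    · simp [h0]
    · have hVnt : Nontrivial V := by
        apply nontrivial_of_finrank_pos (R := ℂ)
        omega
      obtain ⟨x, hx⟩ := exists_ne (0 : V)
      have hxy : ∃ y, B x y ≠ 0 := by
        by_contra h
        push_neg at h
        exact hx (hnd.1 x h)
      obtain ⟨y, hy⟩ := hxy
      have hrefl : B.IsRefl := halt.isRefl
      have hli : LinearIndependent ℂ ![x, y] := by
        rw [LinearIndependent.pair_iff]
        intro s t hst
        have h1 : B (s • x + t • y) x = 0 := by rw [hst]; simp
        have h2 : B (s • x + t • y) y = 0 := by rw [hst]; simp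
        simp only [map_add, _root_.map_smul, LinearMap.add_apply, LinearMap.smul_apply,
          smul_eq_mul, halt.self_eq_zero, mul_zero, zero_add, add_zero] at h1 h2
        have hyx : B y x = -B x y := by rw [← halt.neg_eq]
        rw [hyx] at h1
        constructor
        · rcases mul_eq_zero.mp h2 with h | h
          · exact h
          · exact absurd h hy
        · rcases mul_eq_zero.mp h1 with h | h
          · exact h
          · exact absurd (neg_eq_zero.mp h) hy
      set W : Submodule ℂ V := span ℂ {x, y} with hW
      have hWrank : finrank ℂ W = 2 := by
        have : ({x, y} : Set V) = Set.range ![x, y] := by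
          simp [Set.range_subset_iff, Matrix.range_cons, Matrix.range_empty]
          ext v; simp [Fin.exists_fin_two]; tauto
        rw [hW, this, finrank_span_eq_card hli]
        simp
      have hres : (B.restrict W).Nondegenerate := by
        refine (LinearMap.IsRefl.nondegenerate_iff_separatingLeft (B := B.restrict W) (fun u v h => hrefl u v h)).mpr ?_
        rintro ⟨v, hv⟩ hv0
        obtain ⟨a, b, rfl⟩ := mem_span_pair.mp hv
        have hx' : x ∈ W := subset_span (by simp)
        have hy' : y ∈ W := subset_span (by simp)
        have h1 := hv0 ⟨x, hx'⟩
        have h2 := hv0 ⟨y, hy'⟩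
        simp only [LinearMap.BilinForm.restrict_apply, LinearMap.domRestrict_apply, map_add,
          _root_.map_smul, LinearMap.add_apply, LinearMap.smul_apply,
          smul_eq_mul, halt.self_eq_zero, mul_zero, zero_add, add_zero] at h1 h2
        have hyx : B y x = -B x y := by rw [← halt.neg_eq]
        rw [hyx] at h1
        have hb : b = 0 := by
          rcases mul_eq_zero.mp h1 with h | h
          · exact h
          · exact absurd (neg_eq_zero.mp h) hy
        have ha : a = 0 := by
          rcases mul_eq_zero.mp h2 with h | h
          · exact h
          · exact absurd h hy
        ext
        simp [ha, hb]
      have hcompl : IsCompl W (B.orthogonal W) :=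
        LinearMap.BilinForm.isCompl_orthogonal_of_restrict_nondegenerate hrefl hres
      set W' := B.orthogonal W with hW'
      have hsum : finrank ℂ W + finrank ℂ W' = n := by
        rw [← hn]
        exact Submodule.finrank_add_eq_of_isCompl hcompl
      have hres' : (B.restrict W').Nondegenerate := by
        apply LinearMap.BilinForm.nondegenerate_restrict_of_disjoint_orthogonal B hrefl
        have horth : B.orthogonal W' = W :=
          LinearMap.BilinForm.orthogonal_orthogonal hnd hrefl W
        rw [horth]
        exact hcompl.disjoint.symm
      have halt' : (B.restrict W').IsAlt := fun v => halt v
      have hlt : finrank ℂ W' < n := by omega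
      obtain ⟨k, hk⟩ := ih (finrank ℂ W') hlt (B.restrict W') rfl halt' hres'
      exact ⟨k + 1, by omega⟩

open Module LinearMap Submodule in
/-- The kernel of a skew-symmetric complex matrix of even size has even dimension. -/
lemma even_finrank_ker_of_skew (n : ℕ) (hn : Even n) (A : Matrix (Fin n) (Fin n) ℂ)
    (hA : Aᵀ = -A) : Even (finrank ℂ (LinearMap.ker A.mulVecLin)) := by
  set Bf : LinearMap.BilinForm ℂ (Fin n → ℂ) :=
    LinearMap.mk₂ ℂ (fun v w => v ⬝ᵥ A *ᵥ w)
      (fun v v' w => by simp only [add_dotProduct])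
      (fun c v w => by simp only [smul_dotProduct, smul_eq_mul])
      (fun v w w' => by simp only [mulVec_add, dotProduct_add])
      (fun c v w => by simp only [mulVec_smul, dotProduct_smul, smul_eq_mul]) with hBf
  have hBfa : ∀ v w, Bf v w = v ⬝ᵥ A *ᵥ w := fun v w => rfl
  have hskew : ∀ v w, Bf v w = -Bf w v := by
    intro v w
    rw [hBfa, hBfa, dotProduct_mulVec, ← mulVec_transpose, hA, neg_mulVec, neg_dotProduct,
      dotProduct_comm]
  have halt : Bf.IsAlt := fun v => add_self_eq_zero.mp (eq_neg_iff_add_eq_zero.mp (hskew v v))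
  have hrefl : Bf.IsRefl := halt.isRefl
  have hker : ∀ v, (∀ w, Bf v w = 0) ↔ A *ᵥ v = 0 := by
    intro v
    constructor
    · intro h
      have h' : ∀ w, (A *ᵥ v) ⬝ᵥ w = 0 := by
        intro w
        have := h w
        rw [hskew v w, hBfa, neg_eq_zero, dotProduct_comm] at this
        exact this
      exact dotProduct_eq_zero_iff.mp h'
    · intro h w
      rw [hskew v w, hBfa, h, dotProduct_zero, neg_zero]
  set Kk : Submodule ℂ (Fin n → ℂ) := LinearMap.ker A.mulVecLin with hKk
  have hmem : ∀ v, v ∈ Kk ↔ A *ᵥ v = 0 := fun v => by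
    rw [hKk, LinearMap.mem_ker, mulVecLin_apply]
  obtain ⟨W, hcompl⟩ := Submodule.exists_isCompl Kk
  have hres : (Bf.restrict W).Nondegenerate := by
    apply LinearMap.BilinForm.nondegenerate_restrict_of_disjoint_orthogonal Bf hrefl
    rw [disjoint_iff]
    rw [eq_bot_iff]
    rintro v ⟨hvW, hvO⟩
    have hv0 : ∀ u, Bf v u = 0 := by
      intro u
      obtain ⟨k, w, hk, hw, rfl⟩ := Submodule.codisjoint_iff_exists_add_eq.mp hcompl.codisjoint u
      rw [map_add]
      have e1 : Bf v k = 0 := by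
        rw [hBfa, (hmem k).mp hk, dotProduct_zero]
      have e2 : Bf v w = 0 := hrefl w v (hvO w hw)
      rw [e1, e2, add_zero]
    have : v ∈ Kk := (hmem v).mpr ((hker v).mp hv0)
    have hv : v ∈ Kk ⊓ W := Submodule.mem_inf.mpr ⟨this, hvW⟩
    rwa [disjoint_iff.mp hcompl.disjoint] at hv
  have halt' : (Bf.restrict W).IsAlt := fun v => halt v
  have heW : Even (finrank ℂ W) :=
    even_finrank_of_isAlt_nondeg (finrank ℂ W) (Bf.restrict W) rfl halt' hres
  have hsum : finrank ℂ Kk + finrank ℂ W = n := by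
    rw [Submodule.finrank_add_eq_of_isCompl hcompl]
    simp [Module.finrank_pi]
  obtain ⟨a, ha⟩ := hn
  obtain ⟨b, hb⟩ := heW
  exact ⟨a - b, by omega⟩

open Polynomial in
/-- Characteristic polynomial of a shifted matrix. -/
lemma charpoly_shift {n : ℕ} (M : Matrix (Fin n) (Fin n) ℂ) (z : ℂ) :
    (M - z • 1).charpoly = (Matrix.charpoly M).comp (X + C z) := by
  let f : ℂ[X] →+* ℂ[X] := eval₂RingHom Polynomial.C (X + C z)
  have hmap : (charmatrix M).map f = charmatrix (M - z • (1 : Matrix (Fin n) (Fin n) ℂ)) := by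
    ext i j : 2
    by_cases hij : i = j
    · subst hij
      simp only [Matrix.map_apply, charmatrix_apply_eq, Matrix.sub_apply, Matrix.smul_apply,
        one_apply_eq, smul_eq_mul, mul_one, f, coe_eval₂RingHom, eval₂_sub, eval₂_X, eval₂_C]
      rw [map_sub]
      ring_nf
    · simp only [Matrix.map_apply, charmatrix_apply_ne _ _ _ hij, Matrix.sub_apply,
        Matrix.smul_apply, one_apply_ne hij, smul_eq_mul, mul_zero, sub_zero, f,
        coe_eval₂RingHom, eval₂_neg, eval₂_C]
  calc (M - z • (1 : Matrix (Fin n) (Fin n) ℂ)).charpoly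
      = ((f.mapMatrix) (charmatrix M)).det := by
        rw [RingHom.mapMatrix_apply, hmap]; rfl
    _ = f (charmatrix M).det := (RingHom.map_det f _).symm
    _ = (Matrix.charpoly M).comp (X + C z) := rfl

end Aux

open Module LinearMap Polynomial in
/-- Every eigenvalue of a complex self dual matrix (`Q_{2N} Mᵀ Q_{2N}ᵀ = M`)
has even algebraic multiplicity. -/
theorem selfDual_spectrum_doubly_degenerate (N : ℕ)
    (M : Matrix (Fin (2 * N)) (Fin (2 * N)) ℂ)
    (hM : Qform N * Mᵀ * (Qform N)ᵀ = M) (z : ℂ) :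
    Even ((Matrix.charpoly M).rootMultiplicity z) := by
  classical
  set Q := Qform N with hQdef
  have hQQ : Q * Qᵀ = 1 := Qform_mul_transpose N
  have hQT : Qᵀ = -Q := Qform_transpose N
  have hQQ' : Qᵀ * Q = 1 := by
    calc Qᵀ * Q = Q * Qᵀ := by rw [hQT, neg_mul, mul_neg]
    _ = 1 := hQQ
  set B := M - z • (1 : Matrix (Fin (2 * N)) (Fin (2 * N)) ℂ) with hBdef
  have hBsd : Q * Bᵀ * Qᵀ = B := by
    rw [hBdef, transpose_sub, transpose_smul, transpose_one]
    rw [mul_sub, Matrix.mul_smul, mul_one, sub_mul, Matrix.smul_mul, hM, hQQ]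
  rw [Polynomial.rootMultiplicity_eq_natTrailingDegree, ← charpoly_shift M z, ← hBdef]
  set φ : Module.End ℂ (Fin (2 * N) → ℂ) := Matrix.toLin' B with hφ
  have hφc : φ.charpoly = B.charpoly := by
    rw [hφ, ← LinearMap.charpoly_toMatrix (Matrix.toLin' B) (Pi.basisFun ℂ (Fin (2 * N))),
      LinearMap.toMatrix_eq_toMatrix', LinearMap.toMatrix'_toLin']
  rw [← hφc, ← LinearMap.finrank_maxGenEigenspace_zero_eq]
  rw [Module.End.maxGenEigenspace_eq]
  set k := Module.End.maxGenEigenspaceIndex φ 0 with hk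
  rw [Module.End.genEigenspace_nat]
  have hφ0 : φ - (0 : ℂ) • (1 : Module.End ℂ (Fin (2 * N) → ℂ)) = φ := by
    rw [zero_smul, sub_zero]
  rw [hφ0]
  -- powers of self dual matrices are self dual
  have hBk : Q * (B ^ k)ᵀ * Qᵀ = B ^ k := by
    induction k with
    | zero => simpa using hQQ
    | succ m ihm =>
      rw [pow_succ, transpose_mul]
      calc Q * (Bᵀ * (B ^ m)ᵀ) * Qᵀ
          = (Q * Bᵀ * Qᵀ) * (Q * (B ^ m)ᵀ * Qᵀ) := by
            simp only [Matrix.mul_assoc]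
            rw [← Matrix.mul_assoc Qᵀ Q, hQQ', Matrix.one_mul]
        _ = B * B ^ m := by rw [hBsd, ihm]
        _ = B ^ m * B := by rw [← pow_succ', pow_succ]
  have hφk : φ ^ k = Matrix.toLin' (B ^ k) := by
    rw [hφ]
    induction k with
    | zero => rw [pow_zero, pow_zero, Matrix.toLin'_one]; rfl
    | succ m ihm => rw [pow_succ, pow_succ, Matrix.toLin'_mul, ihm]; rfl
  set Cm := B ^ k with hCm
  set A := Qᵀ * Cm with hAdef
  have hCQA : Cm = Q * A := by
    rw [hAdef, ← Matrix.mul_assoc, hQQ, Matrix.one_mul]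
  have hAT : Aᵀ = -A := by
    have h1 : Cmᵀ * Qᵀ = Qᵀ * Cm := by
      have := congrArg (fun X => Qᵀ * X) hBk
      simp only [← Matrix.mul_assoc] at this
      rw [hQQ', Matrix.one_mul] at this
      simpa [← hCm] using this
    rw [hAdef, transpose_mul, transpose_transpose]
    calc Cmᵀ * Q = -(Cmᵀ * Qᵀ) := by rw [hQT, mul_neg, neg_neg]
    _ = -(Qᵀ * Cm) := by rw [h1]
  have hker : LinearMap.ker (φ ^ k) = LinearMap.ker A.mulVecLin := by
    rw [hφk]
    ext v
    simp only [LinearMap.mem_ker, Matrix.toLin'_apply, mulVecLin_apply, hCQA,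
      ← mulVec_mulVec]
    constructor
    · intro h
      have h1 := congrArg (fun w => Qᵀ *ᵥ w) h
      have h2 : (Qᵀ * (Q * A)) *ᵥ v = 0 := by simpa using h1
      rwa [← Matrix.mul_assoc, hQQ', Matrix.one_mul] at h2
    · intro h
      rw [h, mulVec_zero]
  rw [hker]
  exact even_finrank_ker_of_skew (2 * N) ⟨N, by ring⟩ A hAT
end

section
/- The ratio limit for k = 1: lim_{N→∞} ( ∫_0^∞ x e^{−(N−1)x}(t + x)^N dx / ∫_0^∞ e^{−(N−1)x}(t + x)^N dx ) = 1 − t, for any fixed t with 0 < t < 1. -/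
open Filter MeasureTheory Set

namespace RatioAux

lemma integrableOn_pow_exp {a : ℝ} (ha : 0 < a) (n : ℕ) :
    IntegrableOn (fun u : ℝ => u ^ n * Real.exp (-a * u)) (Ioi 0) := by
  have hn : (-1 : ℝ) < (n : ℝ) := lt_of_lt_of_le (by norm_num) (Nat.cast_nonneg n)
  have h := integrableOn_rpow_mul_exp_neg_mul_rpow (s := (n : ℝ)) (p := 1) hn zero_lt_one ha
  simpa [Real.rpow_natCast] using h

lemma integral_pow_exp {a : ℝ} (ha : 0 < a) (n : ℕ) :
    (∫ u in Ioi (0:ℝ), u ^ n * Real.exp (-a * u)) = (Nat.factorial n : ℝ) / a ^ (n + 1) := by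
  have h := Real.integral_rpow_mul_exp_neg_mul_Ioi (a := (n : ℝ) + 1) (r := a)
    (by positivity) ha
  have h2 : (∫ u in Ioi (0:ℝ), u ^ n * Real.exp (-a * u))
      = ∫ u in Ioi (0:ℝ), u ^ ((n : ℝ) + 1 - 1) * Real.exp (-(a * u)) := by
    refine setIntegral_congr_fun measurableSet_Ioi (fun u hu => ?_)
    rw [show (n : ℝ) + 1 - 1 = ((n : ℕ) : ℝ) by push_cast; ring, Real.rpow_natCast, neg_mul]
  rw [h2, h, Real.Gamma_nat_eq_factorial,
    show ((n : ℝ) + 1) = ((n + 1 : ℕ) : ℝ) by push_cast; ring,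
    Real.rpow_natCast, div_pow, one_pow, one_div, inv_mul_eq_div]

lemma shift_Ioi (t : ℝ) (f : ℝ → ℝ) :
    (∫ x in Ioi (0:ℝ), f (x + t)) = ∫ u in Ioi t, f u := by
  have h := (measurePreserving_add_right (volume : Measure ℝ) t).setIntegral_preimage_emb
    (MeasurableEquiv.addRight t).measurableEmbedding f (Ioi t)
  simpa using h

noncomputable def TT (t : ℝ) (N n : ℕ) : ℝ := ∫ u in Ioi t, u ^ n * Real.exp (-((N:ℝ) - 1) * u)

noncomputable def FF (N n : ℕ) : ℝ := ∫ u in Ioi (0:ℝ), u ^ n * Real.exp (-((N:ℝ) - 1) * u)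

noncomputable def BB (t : ℝ) (N n : ℕ) : ℝ :=
  ∫ u in Ioc (0:ℝ) t, u ^ n * Real.exp (-((N:ℝ) - 1) * u)

noncomputable def ee (t : ℝ) (N : ℕ) : ℝ := t ^ (N + 1) * Real.exp (-((N:ℝ) - 1) * t)

noncomputable def pp (N : ℕ) : ℝ := ((N:ℝ) + 1) / ((N:ℝ) - 1)

lemma aN_pos {N : ℕ} (hN : 2 ≤ N) : 0 < (N:ℝ) - 1 := by
  have : (2:ℝ) ≤ (N:ℝ) := by exact_mod_cast hN
  linarith

lemma FF_split {t : ℝ} (ht : 0 < t) {N : ℕ} (hN : 2 ≤ N) (n : ℕ) :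
    FF N n = BB t N n + TT t N n := by
  have ha := aN_pos hN
  rw [FF, BB, TT, ← Ioc_union_Ioi_eq_Ioi ht.le]
  exact setIntegral_union (Ioc_disjoint_Ioi le_rfl) measurableSet_Ioi
    ((integrableOn_pow_exp ha n).mono_set Ioc_subset_Ioi_self)
    ((integrableOn_pow_exp ha n).mono_set (Ioi_subset_Ioi ht.le))

lemma BB_nonneg (t : ℝ) (N n : ℕ) : 0 ≤ BB t N n :=
  setIntegral_nonneg measurableSet_Ioc fun u hu =>
    mul_nonneg (pow_nonneg hu.1.le n) (Real.exp_pos _).le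

lemma TT_nonneg {t : ℝ} (ht : 0 ≤ t) (N n : ℕ) : 0 ≤ TT t N n :=
  setIntegral_nonneg measurableSet_Ioi fun u hu =>
    mul_nonneg (pow_nonneg (ht.trans hu.le) n) (Real.exp_pos _).le

lemma FF_nonneg (N n : ℕ) : 0 ≤ FF N n :=
  setIntegral_nonneg measurableSet_Ioi fun u hu =>
    mul_nonneg (pow_nonneg hu.le n) (Real.exp_pos _).le

lemma pow_exp_mono {a t u : ℝ} {n : ℕ} (htp : 0 < t) (hu0 : 0 < u) (hut : u ≤ t)
    (hn : a * t ≤ n) :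
    u ^ n * Real.exp (-a * u) ≤ t ^ n * Real.exp (-a * t) := by
  have h1 : u ^ n = Real.exp ((n : ℝ) * Real.log u) := by
    rw [Real.exp_nat_mul, Real.exp_log hu0]
  have h2 : t ^ n = Real.exp ((n : ℝ) * Real.log t) := by
    rw [Real.exp_nat_mul, Real.exp_log htp]
  rw [h1, h2, ← Real.exp_add, ← Real.exp_add, Real.exp_le_exp]
  have hlog : Real.log u - Real.log t ≤ u / t - 1 := by
    rw [← Real.log_div (ne_of_gt hu0) (ne_of_gt htp)]
    exact Real.log_le_sub_one_of_pos (div_pos hu0 htp)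
  have hlog2 : t * (Real.log u - Real.log t) ≤ u - t := by
    have h := mul_le_mul_of_nonneg_left hlog htp.le
    have h' : t * (u / t - 1) = u - t := by field_simp
    rw [h'] at h
    exact h
  have hn0 : (0:ℝ) ≤ (n : ℝ) := Nat.cast_nonneg n
  have k1 : (n:ℝ) * (t * (Real.log u - Real.log t)) ≤ (n:ℝ) * (u - t) :=
    mul_le_mul_of_nonneg_left hlog2 hn0
  have k2 : (n:ℝ) * (u - t) ≤ (a * t) * (u - t) :=
    mul_le_mul_of_nonpos_right hn (by linarith)
  have k3 : t * ((n:ℝ) * Real.log u - (n:ℝ) * Real.log t) ≤ t * (a * u - a * t) := by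
    nlinarith [k1, k2]
  have k4 := le_of_mul_le_mul_left k3 htp
  linarith

lemma BB_le {t : ℝ} (htp : 0 < t) (ht1 : t < 1) {N : ℕ} (hN : 2 ≤ N) {n : ℕ} (hn : N ≤ n) :
    BB t N n ≤ t ^ (n+1) * Real.exp (-((N:ℝ) - 1) * t) := by
  have ha := aN_pos hN
  have hat : ((N:ℝ) - 1) * t ≤ (n : ℝ) := by
    have h2 : (N:ℝ) ≤ (n:ℝ) := by exact_mod_cast hn
    nlinarith
  have h1 : BB t N n ≤ ∫ _u in Ioc (0:ℝ) t, t ^ n * Real.exp (-((N:ℝ) - 1) * t) :=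
    setIntegral_mono_on ((integrableOn_pow_exp ha n).mono_set Ioc_subset_Ioi_self)
      (integrableOn_const measure_Ioc_lt_top.ne) measurableSet_Ioc
      (fun u hu => pow_exp_mono htp hu.1 hu.2 hat)
  have h2 : (∫ _u in Ioc (0:ℝ) t, t ^ n * Real.exp (-((N:ℝ) - 1) * t))
      = t ^ (n+1) * Real.exp (-((N:ℝ) - 1) * t) := by
    rw [setIntegral_const, Real.volume_real_Ioc_of_le htp.le]
    rw [smul_eq_mul]; ring
  rw [h2] at h1
  exact h1

lemma TT_lower {t s : ℝ} (ht : 0 < t) (hts : t < s) (hs0 : 0 < s) (hs1 : s < 1) {N : ℕ}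
    (hN : 2 ≤ N) (n : ℕ) :
    (1 - s) * (s ^ n * Real.exp (-((N:ℝ) - 1))) ≤ TT t N n := by
  have ha := aN_pos hN
  have hsub : Ioc s (1:ℝ) ⊆ Ioi t := fun x hx => lt_trans hts hx.1
  have h1 : (∫ _u in Ioc s (1:ℝ), s ^ n * Real.exp (-((N:ℝ) - 1)))
      ≤ ∫ u in Ioc s (1:ℝ), u ^ n * Real.exp (-((N:ℝ) - 1) * u) := by
    refine setIntegral_mono_on (integrableOn_const measure_Ioc_lt_top.ne)
      ((integrableOn_pow_exp ha n).mono_set (fun x hx => hs0.trans hx.1)) measurableSet_Ioc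
      (fun u hu => ?_)
    have hu0 : 0 < u := hs0.trans hu.1
    have hpow : s ^ n ≤ u ^ n := pow_le_pow_left₀ hs0.le hu.1.le n
    have hexp : Real.exp (-((N:ℝ) - 1)) ≤ Real.exp (-((N:ℝ) - 1) * u) := by
      apply Real.exp_le_exp.mpr
      nlinarith [hu.2, hu0]
    exact mul_le_mul hpow hexp (Real.exp_pos _).le (pow_nonneg hu0.le n)
  have h2 : (∫ _u in Ioc s (1:ℝ), s ^ n * Real.exp (-((N:ℝ) - 1)))
      = (1 - s) * (s ^ n * Real.exp (-((N:ℝ) - 1))) := by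
    rw [setIntegral_const, Real.volume_real_Ioc_of_le hs1.le]
    rw [smul_eq_mul]
  have hf : 0 ≤ᵐ[volume.restrict (Ioi t)]
      (fun u : ℝ => u ^ n * Real.exp (-((N:ℝ) - 1) * u)) :=
    (ae_restrict_iff' measurableSet_Ioi).mpr (Filter.Eventually.of_forall fun u hu =>
      mul_nonneg (pow_nonneg (le_of_lt (ht.trans hu)) n) (Real.exp_pos _).le)
  have h3 : (∫ u in Ioc s (1:ℝ), u ^ n * Real.exp (-((N:ℝ) - 1) * u)) ≤ TT t N n :=
    setIntegral_mono_set ((integrableOn_pow_exp ha n).mono_set (Ioi_subset_Ioi ht.le))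
      hf (HasSubset.Subset.eventuallyLE hsub)
  linarith

lemma FF_val {N : ℕ} (hN : 2 ≤ N) (n : ℕ) :
    FF N n = (Nat.factorial n : ℝ) / ((N:ℝ) - 1) ^ (n + 1) := integral_pow_exp (aN_pos hN) n

lemma den_eq (t : ℝ) (N : ℕ) :
    (∫ x in Ioi (0:ℝ), Real.exp (-((N : ℝ) - 1) * x) * (t + x) ^ N)
      = Real.exp (((N:ℝ) - 1) * t) * TT t N N := by
  have h1 : (∫ x in Ioi (0:ℝ), Real.exp (-((N : ℝ) - 1) * x) * (t + x) ^ N)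
      = ∫ x in Ioi (0:ℝ),
          (fun u => u ^ N * Real.exp (-((N:ℝ) - 1) * (u - t))) (x + t) := by
    refine setIntegral_congr_fun measurableSet_Ioi (fun x hx => ?_)
    simp only [add_sub_cancel_right]
    rw [add_comm t x]
    ring
  rw [h1, shift_Ioi t (fun u => u ^ N * Real.exp (-((N:ℝ) - 1) * (u - t))), TT,
    ← MeasureTheory.integral_const_mul]
  refine setIntegral_congr_fun measurableSet_Ioi (fun u hu => ?_)
  rw [show -((N:ℝ) - 1) * (u - t) = ((N:ℝ) - 1) * t + -((N:ℝ) - 1) * u by ring, Real.exp_add]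
  ring

lemma num_eq {t : ℝ} (ht : 0 < t) {N : ℕ} (hN : 2 ≤ N) :
    (∫ x in Ioi (0:ℝ), x * Real.exp (-((N : ℝ) - 1) * x) * (t + x) ^ N)
      = Real.exp (((N:ℝ) - 1) * t) * (TT t N (N + 1) - t * TT t N N) := by
  have ha := aN_pos hN
  have h1 : (∫ x in Ioi (0:ℝ), x * Real.exp (-((N : ℝ) - 1) * x) * (t + x) ^ N)
      = ∫ x in Ioi (0:ℝ),
          (fun u => (u - t) * u ^ N * Real.exp (-((N:ℝ) - 1) * (u - t))) (x + t) := by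
    refine setIntegral_congr_fun measurableSet_Ioi (fun x hx => ?_)
    simp only [add_sub_cancel_right]
    rw [add_comm t x]
    ring
  rw [h1, shift_Ioi t (fun u => (u - t) * u ^ N * Real.exp (-((N:ℝ) - 1) * (u - t)))]
  have h2 : ∀ u : ℝ, (u - t) * u ^ N * Real.exp (-((N:ℝ) - 1) * (u - t))
      = Real.exp (((N:ℝ) - 1) * t) * (u ^ (N + 1) * Real.exp (-((N:ℝ) - 1) * u)
          - t * (u ^ N * Real.exp (-((N:ℝ) - 1) * u))) := by
    intro u
    rw [show -((N:ℝ) - 1) * (u - t) = ((N:ℝ) - 1) * t + -((N:ℝ) - 1) * u by ring, Real.exp_add]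
    ring
  simp_rw [h2]
  rw [MeasureTheory.integral_const_mul, integral_sub
    ((integrableOn_pow_exp ha (N + 1)).mono_set (Ioi_subset_Ioi ht.le))
    (((integrableOn_pow_exp ha N).mono_set (Ioi_subset_Ioi ht.le)).const_mul t),
    MeasureTheory.integral_const_mul, TT, TT]

end RatioAux

open RatioAux in
/-- The `k = 1` ratio limit:
`lim_{N→∞} ∫_0^∞ x e^{−(N−1)x}(t+x)^N dx / ∫_0^∞ e^{−(N−1)x}(t+x)^N dx = 1 − t`
for `0 < t < 1`. -/
theorem ratio_limit_k_one (t : ℝ) (ht : 0 < t) (ht1 : t < 1) :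
    Tendsto
      (fun N : ℕ =>
        (∫ x in Set.Ioi (0 : ℝ), x * Real.exp (-((N : ℝ) - 1) * x) * (t + x) ^ N) /
          (∫ x in Set.Ioi (0 : ℝ), Real.exp (-((N : ℝ) - 1) * x) * (t + x) ^ N))
      atTop (nhds (1 - t)) := by
  have hE1 : 1 < Real.exp (1 - t) := by
    have h := Real.exp_lt_exp.mpr (show (0:ℝ) < 1 - t by linarith)
    simpa using h
  obtain ⟨r, hrdef⟩ : ∃ r : ℝ, r = t * Real.exp (1 - t) := ⟨_, rfl⟩
  have hr0 : 0 < r := by rw [hrdef]; positivity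
  have htr : t < r := by
    rw [hrdef]; nlinarith [mul_pos ht (sub_pos.mpr hE1)]
  have hr1 : r < 1 := by
    have hlog := Real.log_lt_sub_one_of_pos ht (ne_of_lt ht1)
    calc r = Real.exp (Real.log t + (1 - t)) := by
          rw [Real.exp_add, Real.exp_log ht, hrdef]
      _ < Real.exp 0 := Real.exp_lt_exp.mpr (by linarith)
      _ = 1 := Real.exp_zero
  obtain ⟨s, hsdef⟩ : ∃ s : ℝ, s = (1 + r) / 2 := ⟨_, rfl⟩
  have hs0 : 0 < s := by rw [hsdef]; linarith
  have hrs : r < s := by rw [hsdef]; linarith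
  have hs1 : s < 1 := by rw [hsdef]; linarith
  have hts : t < s := lt_trans htr hrs
  obtain ⟨q, hqdef⟩ : ∃ q : ℝ, q = r / s := ⟨_, rfl⟩
  have hq0 : 0 ≤ q := by rw [hqdef]; exact div_nonneg hr0.le hs0.le
  have hq1 : q < 1 := by rw [hqdef]; exact (div_lt_one hs0).mpr hrs
  obtain ⟨C, hCdef⟩ : ∃ C : ℝ, C = t / (1 - s) := ⟨_, rfl⟩
  have hee : ∀ N : ℕ, 0 ≤ ee t N := fun N =>
    mul_nonneg (pow_nonneg ht.le _) (Real.exp_pos _).le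
  have key : ∀ N : ℕ, 2 ≤ N →
      0 < TT t N N ∧ TT t N N ≤ FF N N ∧ FF N N - ee t N ≤ TT t N N ∧
      TT t N (N+1) ≤ FF N (N+1) ∧ FF N (N+1) - ee t N ≤ TT t N (N+1) ∧
      0 < FF N N ∧ 0 ≤ TT t N (N+1) ∧ 0 ≤ FF N (N+1) ∧
      ee t N / FF N N ≤ C * q ^ N ∧ FF N (N+1) = pp N * FF N N := by
    intro N hN
    have ha := aN_pos hN
    have hsplit := FF_split ht hN N
    have hsplit' := FF_split ht hN (N+1)
    have hBnn := BB_nonneg t N N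
    have hBnn' := BB_nonneg t N (N+1)
    have hBle : BB t N N ≤ ee t N := BB_le ht ht1 hN le_rfl
    have hBle' : BB t N (N+1) ≤ ee t N := by
      have h1 : BB t N (N+1) ≤ t ^ (N+2) * Real.exp (-((N:ℝ) - 1) * t) :=
        BB_le ht ht1 hN (Nat.le_succ N)
      have h2 : t ^ (N+2) ≤ t ^ (N+1) := pow_le_pow_of_le_one ht.le ht1.le (Nat.le_succ _)
      have h3 : t ^ (N+2) * Real.exp (-((N:ℝ) - 1) * t)
          ≤ t ^ (N+1) * Real.exp (-((N:ℝ) - 1) * t) :=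
        mul_le_mul_of_nonneg_right h2 (Real.exp_pos _).le
      exact h1.trans h3
    have hTlow := TT_lower ht hts hs0 hs1 hN N
    have hden : 0 < (1 - s) * (s ^ N * Real.exp (-((N:ℝ) - 1))) :=
      mul_pos (by linarith) (mul_pos (pow_pos hs0 N) (Real.exp_pos _))
    have hTpos : 0 < TT t N N := lt_of_lt_of_le hden hTlow
    have hTleF : TT t N N ≤ FF N N := by rw [hsplit]; linarith
    have hFsub : FF N N - ee t N ≤ TT t N N := by rw [hsplit]; linarith
    have hT'leF : TT t N (N+1) ≤ FF N (N+1) := by rw [hsplit']; linarith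
    have hF'sub : FF N (N+1) - ee t N ≤ TT t N (N+1) := by rw [hsplit']; linarith
    have hFpos : 0 < FF N N := lt_of_lt_of_le hTpos hTleF
    have hT'nn := TT_nonneg ht.le N (N+1)
    have hF'nn := FF_nonneg N (N+1)
    have hFlow : (1 - s) * (s ^ N * Real.exp (-((N:ℝ) - 1))) ≤ FF N N := hTlow.trans hTleF
    have hexpb : Real.exp (-((N:ℝ) - 1) * t)
        ≤ Real.exp (1 - t) ^ N * Real.exp (-((N:ℝ) - 1)) := by
      rw [← Real.exp_nat_mul, ← Real.exp_add]
      apply Real.exp_le_exp.mpr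
      have h1t : t ≤ 1 := ht1.le
      nlinarith
    have hbeta : ee t N / FF N N ≤ C * q ^ N := by
      have step1 : ee t N / FF N N
          ≤ ee t N / ((1 - s) * (s ^ N * Real.exp (-((N:ℝ) - 1)))) :=
        div_le_div_of_nonneg_left (hee N) hden hFlow
      have hnum : ee t N ≤ t ^ (N+1) * (Real.exp (1 - t) ^ N * Real.exp (-((N:ℝ) - 1))) :=
        mul_le_mul_of_nonneg_left hexpb (pow_nonneg ht.le _)
      have step2 : ee t N / ((1 - s) * (s ^ N * Real.exp (-((N:ℝ) - 1))))
          ≤ (t ^ (N+1) * (Real.exp (1 - t) ^ N * Real.exp (-((N:ℝ) - 1))))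
              / ((1 - s) * (s ^ N * Real.exp (-((N:ℝ) - 1)))) :=
        (div_le_div_iff_of_pos_right hden).mpr hnum
      have step3 : (t ^ (N+1) * (Real.exp (1 - t) ^ N * Real.exp (-((N:ℝ) - 1))))
          / ((1 - s) * (s ^ N * Real.exp (-((N:ℝ) - 1)))) = C * q ^ N := by
        rw [hCdef, hqdef, hrdef, div_pow, mul_pow]
        have hsne : s ≠ 0 := hs0.ne'
        have h1s : (1:ℝ) - s ≠ 0 := by linarith
        have hexpne : Real.exp (-((N:ℝ) - 1)) ≠ 0 := (Real.exp_pos _).ne'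
        field_simp
        ring
      exact step1.trans (step2.trans_eq step3)
    have hFF' : FF N (N+1) = pp N * FF N N := by
      rw [FF_val hN (N+1), FF_val hN N]
      simp only [pp]
      rw [Nat.factorial_succ]
      push_cast
      field_simp
      ring
    exact ⟨hTpos, hTleF, hFsub, hT'leF, hF'sub, hFpos, hT'nn, hF'nn, hbeta, hFF'⟩
  have hratio : ∀ N : ℕ, 2 ≤ N →
      (∫ x in Set.Ioi (0 : ℝ), x * Real.exp (-((N : ℝ) - 1) * x) * (t + x) ^ N) /
          (∫ x in Set.Ioi (0 : ℝ), Real.exp (-((N : ℝ) - 1) * x) * (t + x) ^ N)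
        = TT t N (N+1) / TT t N N - t := by
    intro N hN
    obtain ⟨hTpos, -, -, -, -, -, -, -, -, -⟩ := key N hN
    rw [num_eq ht hN, den_eq, mul_div_mul_left _ _ (Real.exp_ne_zero _), sub_div,
      mul_div_cancel_right₀ _ hTpos.ne']
  have hβ : Tendsto (fun N : ℕ => ee t N / FF N N) atTop (nhds 0) := by
    apply squeeze_zero'
    · filter_upwards [eventually_ge_atTop 2] with N hN
      obtain ⟨-, -, -, -, -, hFpos, -, -, -, -⟩ := key N hN
      exact div_nonneg (hee N) hFpos.le
    · filter_upwards [eventually_ge_atTop 2] with N hN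
      obtain ⟨-, -, -, -, -, -, -, -, hbeta, -⟩ := key N hN
      exact hbeta
    · have h := (tendsto_pow_atTop_nhds_zero_of_lt_one hq0 hq1).const_mul C
      simpa using h
  have hpl : Tendsto pp atTop (nhds 1) := by
    have h1 : Tendsto (fun N : ℕ => (N:ℝ) - 1) atTop atTop := by
      simpa [sub_eq_add_neg] using
        tendsto_atTop_add_const_right atTop (-1 : ℝ) tendsto_natCast_atTop_atTop
    have h2 : Tendsto (fun N : ℕ => 2 / ((N:ℝ) - 1)) atTop (nhds 0) :=
      Tendsto.div_atTop tendsto_const_nhds h1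
    have h3 : Tendsto (fun N : ℕ => 1 + 2 / ((N:ℝ) - 1)) atTop (nhds 1) := by
      simpa using tendsto_const_nhds.add h2
    apply Filter.Tendsto.congr' _ h3
    filter_upwards [eventually_ge_atTop 2] with N hN
    have hA := aN_pos hN
    simp only [pp]
    field_simp
    ring
  have hsmall : ∀ᶠ N : ℕ in atTop, ee t N / FF N N < 1 / 2 :=
    hβ.eventually_lt_const (by norm_num)
  have hL : Tendsto (fun N : ℕ => (FF N (N+1) - ee t N) / FF N N - t) atTop (nhds (1 - t)) := by
    have h0 : Tendsto (fun N : ℕ => pp N - ee t N / FF N N - t) atTop (nhds (1 - 0 - t)) :=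
      (hpl.sub hβ).sub_const t
    rw [show (1:ℝ) - 0 - t = 1 - t by ring] at h0
    apply Filter.Tendsto.congr' _ h0
    filter_upwards [eventually_ge_atTop 2] with N hN
    obtain ⟨-, -, -, -, -, hFpos, -, -, -, hFF'⟩ := key N hN
    rw [hFF', sub_div, mul_div_cancel_right₀ _ hFpos.ne']
  have hU : Tendsto (fun N : ℕ => FF N (N+1) / (FF N N - ee t N) - t) atTop (nhds (1 - t)) := by
    have h0 : Tendsto (fun N : ℕ => pp N / (1 - ee t N / FF N N) - t) atTop
        (nhds (1 / (1 - 0) - t)) :=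
      (hpl.div (tendsto_const_nhds.sub hβ) (by norm_num)).sub_const t
    rw [show (1:ℝ) / (1 - 0) - t = 1 - t by norm_num] at h0
    apply Filter.Tendsto.congr' _ h0
    filter_upwards [eventually_ge_atTop 2] with N hN
    obtain ⟨-, -, -, -, -, hFpos, -, -, -, hFF'⟩ := key N hN
    have h1 : FF N N - ee t N = FF N N * (1 - ee t N / FF N N) := by
      field_simp
    rw [hFF', h1, mul_comm (pp N) (FF N N), mul_div_mul_left _ _ hFpos.ne']
  apply tendsto_of_tendsto_of_tendsto_of_le_of_le' hL hU
  · filter_upwards [eventually_ge_atTop 2] with N hN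
    obtain ⟨hTpos, hTleF, hFsub, hT'leF, hF'sub, hFpos, hT'nn, hF'nn, -, -⟩ := key N hN
    rw [hratio N hN]
    have hdiv : (FF N (N+1) - ee t N) / FF N N ≤ TT t N (N+1) / TT t N N :=
      div_le_div₀ hT'nn hF'sub hTpos hTleF
    linarith
  · filter_upwards [eventually_ge_atTop 2, hsmall] with N hN hNs
    obtain ⟨hTpos, hTleF, hFsub, hT'leF, hF'sub, hFpos, hT'nn, hF'nn, -, -⟩ := key N hN
    rw [hratio N hN]
    have h2 : ee t N < 1 / 2 * FF N N := (div_lt_iff₀ hFpos).mp hNs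
    have hFe : 0 < FF N N - ee t N := by linarith
    have hdiv : TT t N (N+1) / TT t N N ≤ FF N (N+1) / (FF N N - ee t N) :=
      div_le_div₀ hF'nn hT'leF hFe hFsub
    linarith
end

section
/- Endpoint Laplace lemma: for t > 0, a > −1, lim_{N→∞} N^{a+1} (1+t)^{−N} ∫_0^1 (1−x)^a (t + x)^N dx = Γ(a+1) (1+t)^{a+1}. -/
open Filter intervalIntegral

open Set MeasureTheory Real in
/-- Key limit: `∫_0^{n/(1+t)} v^a (1-v/n)^n dv → Γ(a+1)`. -/
lemma endpoint_laplace_aux (t a : ℝ) (ht : 0 < t) (ha : -1 < a) :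
    Tendsto (fun n : ℕ => ∫ v in (0:ℝ)..((n : ℝ) / (1 + t)), v ^ a * (1 - v / n) ^ n)
      atTop (nhds (Real.Gamma (a + 1))) := by
  have ht1 : (0:ℝ) < 1 + t := by linarith
  rw [Real.Gamma_eq_integral (by linarith : (0:ℝ) < a + 1)]
  simp only [add_sub_cancel_right]
  set f : ℕ → ℝ → ℝ := fun n =>
    indicator (Ioc 0 ((n : ℝ) / (1 + t))) fun x : ℝ => x ^ a * (1 - x / n) ^ n with hf
  have f_ible : ∀ n : ℕ, Integrable (f n) (volume.restrict (Ioi 0)) := by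
    intro n
    rw [integrable_indicator_iff (measurableSet_Ioc : MeasurableSet (Ioc (_ : ℝ) _)), IntegrableOn,
      Measure.restrict_restrict_of_subset Ioc_subset_Ioi_self, ← IntegrableOn, ←
      intervalIntegrable_iff_integrableOn_Ioc_of_le (by positivity : (0:ℝ) ≤ (n:ℝ) / (1 + t))]
    exact (intervalIntegral.intervalIntegrable_rpow' ha).mul_continuousOn
      (Continuous.continuousOn (by continuity))
  have f_tends : ∀ x : ℝ, x ∈ Ioi (0 : ℝ) →
      Tendsto (fun n : ℕ => f n x) atTop (nhds (Real.exp (-x) * x ^ a)) := by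
    intro x hx
    apply Tendsto.congr'
    · show ∀ᶠ n : ℕ in atTop, x ^ a * (1 - x / n) ^ n = f n x
      filter_upwards [eventually_ge_atTop ⌈x * (1 + t)⌉₊] with n hn
      rw [Nat.ceil_le] at hn
      simp only [f]
      rw [indicator_of_mem]
      exact ⟨hx, (le_div_iff₀ ht1).mpr hn⟩
    · rw [mul_comm]
      refine Tendsto.const_mul _ ?_
      convert Real.tendsto_one_add_div_pow_exp (-x) using 2 with n
      rw [neg_div, ← sub_eq_add_neg]
  convert tendsto_integral_of_dominated_convergence _ (fun n => (f_ible n).1)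
    (Real.GammaIntegral_convergent (by linarith : (0:ℝ) < a + 1)) _
    ((ae_restrict_iff' measurableSet_Ioi).mpr (ae_of_all _ f_tends)) using 1
  · ext1 n
    rw [hf, MeasureTheory.integral_indicator (measurableSet_Ioc : MeasurableSet (Ioc (_ : ℝ) _)),
      intervalIntegral.integral_of_le (by positivity : (0:ℝ) ≤ (n:ℝ) / (1 + t)),
      Measure.restrict_restrict_of_subset Ioc_subset_Ioi_self]
  · intro n
    rw [ae_restrict_iff' measurableSet_Ioi]
    filter_upwards with x hx
    simp only [f, add_sub_cancel_right]
    rcases lt_or_ge ((n : ℝ) / (1 + t)) x with hxn | hxn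
    · rw [indicator_of_notMem (notMem_Ioc_of_gt hxn), norm_zero,
        mul_nonneg_iff_right_nonneg_of_pos (Real.exp_pos _)]
      exact Real.rpow_nonneg (le_of_lt hx) _
    · have hxn' : x ≤ (n : ℝ) := hxn.trans (div_le_self (Nat.cast_nonneg n) (by linarith))
      have h1 : (0:ℝ) ≤ 1 - x / n := by
        rcases Nat.eq_zero_or_pos n with h | h
        · simp [h]
        · rw [sub_nonneg]
          exact div_le_one_of_le₀ hxn' (Nat.cast_nonneg n)
      rw [indicator_of_mem (mem_Ioc.mpr ⟨mem_Ioi.mp hx, hxn⟩), Real.norm_eq_abs, abs_mul,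
        abs_of_nonneg (Real.rpow_nonneg (le_of_lt hx) _), abs_of_nonneg (pow_nonneg h1 _),
        mul_comm, mul_le_mul_iff_left₀ (Real.rpow_pos_of_pos hx _)]
      exact Real.one_sub_div_pow_le_exp_neg hxn'

/-- Endpoint Laplace lemma: for `t > 0` and `a > −1`,
`lim_{N→∞} N^{a+1} (1+t)^{−N} ∫_0^1 (1−x)^a (t+x)^N dx = Γ(a+1)(1+t)^{a+1}`. -/
theorem endpoint_laplace (t a : ℝ) (ht : 0 < t) (ha : -1 < a) :
    Tendsto
      (fun N : ℕ =>
        (N : ℝ) ^ (a + 1) * ((1 + t) ^ N)⁻¹ *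
          ∫ x in (0 : ℝ)..1, (1 - x) ^ a * (t + x) ^ N)
      atTop (nhds (Real.Gamma (a + 1) * (1 + t) ^ (a + 1))) := by
  have ht1 : (0:ℝ) < 1 + t := by linarith
  have key := (endpoint_laplace_aux t a ht ha).const_mul ((1 + t) ^ (a + 1))
  rw [mul_comm] at key
  refine Tendsto.congr' ?_ key
  filter_upwards [eventually_ge_atTop 1] with n hn
  have hn0 : (0:ℝ) < (n : ℝ) := by exact_mod_cast hn
  set c : ℝ := (1 + t) / n with hc
  have hc0 : 0 < c := by positivity
  -- step 1 : substitute x ↦ 1 - x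
  have step1 : (∫ x in (0:ℝ)..1, (1 - x) ^ a * (t + x) ^ n)
      = ∫ u in (0:ℝ)..1, u ^ a * (1 + t - u) ^ n := by
    have := intervalIntegral.integral_comp_sub_left
      (a := (0:ℝ)) (b := 1) (fun u => u ^ a * (1 + t - u) ^ n) 1
    simp only [sub_zero, sub_self] at this
    rw [← this]
    congr 1
    ext x
    congr 2
    ring
  -- step 2 : substitute u = c * v
  have step2 : (∫ u in (0:ℝ)..1, u ^ a * (1 + t - u) ^ n)
      = c • ∫ v in (0:ℝ)..((n:ℝ) / (1 + t)), (c * v) ^ a * (1 + t - c * v) ^ n := by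
    rw [intervalIntegral.smul_integral_comp_mul_left
      (fun u => u ^ a * (1 + t - u) ^ n) c, mul_zero]
    congr 1
    rw [hc]
    field_simp
  -- step 3 : simplify the integrand on [0, n/(1+t)]
  have step3 : (∫ v in (0:ℝ)..((n:ℝ) / (1 + t)), (c * v) ^ a * (1 + t - c * v) ^ n)
      = c ^ a * (1 + t) ^ n * ∫ v in (0:ℝ)..((n:ℝ) / (1 + t)), v ^ a * (1 - v / n) ^ n := by
    rw [← intervalIntegral.integral_const_mul]
    refine intervalIntegral.integral_congr fun v hv => ?_
    have hv0 : 0 ≤ v := by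
      rcases (Set.uIcc_of_le (by positivity : (0:ℝ) ≤ (n:ℝ)/(1+t))) ▸ hv with ⟨h1, _⟩
      exact h1
    have e1 : (c * v) ^ a = c ^ a * v ^ a := Real.mul_rpow hc0.le hv0
    have e2 : (1 + t - c * v) = (1 + t) * (1 - v / n) := by
      rw [hc]; field_simp
    rw [e1, e2, mul_pow]
    ring
  rw [step1, step2, step3, smul_eq_mul]
  have hca : c * (c ^ a * (1 + t) ^ n) = c ^ (a + 1) * (1 + t) ^ n := by
    rw [Real.rpow_add_one hc0.ne']; ring
  have hfin : (n : ℝ) ^ (a + 1) * ((1 + t) ^ n)⁻¹ * (c ^ (a + 1) * (1 + t) ^ n)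
      = (1 + t) ^ (a + 1) := by
    have : (n : ℝ) ^ (a + 1) * c ^ (a + 1) = (1 + t) ^ (a + 1) := by
      rw [← Real.mul_rpow hn0.le hc0.le, hc, mul_div_cancel₀ _ hn0.ne']
    field_simp
    linear_combination this
  symm
  calc (n : ℝ) ^ (a + 1) * ((1 + t) ^ n)⁻¹ *
        (c * (c ^ a * (1 + t) ^ n * ∫ v in (0:ℝ)..((n:ℝ) / (1 + t)), v ^ a * (1 - v / n) ^ n))
      = ((n : ℝ) ^ (a + 1) * ((1 + t) ^ n)⁻¹ * (c ^ (a + 1) * (1 + t) ^ n)) *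
        ∫ v in (0:ℝ)..((n:ℝ) / (1 + t)), v ^ a * (1 - v / n) ^ n := by
        rw [← hca]; ring
    _ = (1 + t) ^ (a + 1) * ∫ v in (0:ℝ)..((n:ℝ) / (1 + t)), v ^ a * (1 - v / n) ^ n := by
        rw [hfin]
end
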